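/- arXiv:1902.00342 — 5 statements merged into one kernel-verified Lean document; each statement's English description precedes it below -/
import Mathlib

section
/- Let T be a rooted tree with finitely many nodes and non-negative edge lengths, inducing the tree metric d_T (path length). For two probability measures μ, ν supported on the nodes of T, the 1-Wasserstein distance with ground metric d_T equals the sum over all edges e of w_e · |μ(Γ(v_e)) − ν(Γ(v_e))|, where w_e is the length of edge e, v_e is the endpoint of e farther from the root, and Γ(v_e) is the set of nodes in the subtree rooted at v_e. -/
open Finset

structure WTree (V : Type) where
  root : V
  parent : V → V
  parent_root : parent root = root
  reaches_root : ∀ v : V, ∃ k : ℕ, parent^[k] v = root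
  wt : V → ℝ
  wt_nonneg : ∀ v, 0 ≤ wt v

namespace WTree

open Classical

variable {V : Type} [Fintype V]

def isAnc (T : WTree V) (u x : V) : Prop := ∃ k : ℕ, T.parent^[k] x = u

noncomputable def pathEdges (T : WTree V) (x : V) : Finset V :=
  Finset.univ.filter (fun u => u ≠ T.root ∧ T.isAnc u x)

noncomputable def treeDist (T : WTree V) (x z : V) : ℝ :=
  ∑ u ∈ ((T.pathEdges x \ T.pathEdges z) ∪ (T.pathEdges z \ T.pathEdges x)), T.wt u

noncomputable def subtreeMass (T : WTree V) (μ : V → ℝ) (u : V) : ℝ :=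
  ∑ x ∈ Finset.univ.filter (fun x => T.isAnc u x), μ x

noncomputable def TW (T : WTree V) (μ ν : V → ℝ) : ℝ :=
  ∑ u ∈ Finset.univ.filter (fun u => u ≠ T.root),
    T.wt u * |T.subtreeMass μ u - T.subtreeMass ν u|

end WTree

set_option linter.unusedSectionVars false

namespace WTree

open Classical

variable {V : Type} [Fintype V] (T : WTree V)

noncomputable def depth (v : V) : ℕ := Nat.find (T.reaches_root v)

lemma iterate_depth (v : V) : T.parent^[T.depth v] v = T.root := Nat.find_spec (T.reaches_root v)

lemma iterate_root (k : ℕ) : T.parent^[k] T.root = T.root :=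
  Function.iterate_fixed T.parent_root k

lemma iterate_of_depth_le {v : V} {k : ℕ} (h : T.depth v ≤ k) : T.parent^[k] v = T.root := by
  rw [← Nat.sub_add_cancel h, Function.iterate_add_apply, iterate_depth, iterate_root]

lemma depth_eq_zero {v : V} : T.depth v = 0 ↔ v = T.root := by
  constructor
  · intro h
    have := T.iterate_depth v
    rwa [h, Function.iterate_zero_apply] at this
  · intro h
    subst h
    exact Nat.le_zero.mp (Nat.find_min' _ (by simp))

lemma eq_root_of_cycle {v : V} {m : ℕ} (hm : m ≠ 0) (h : T.parent^[m] v = v) : v = T.root := by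
  by_cases hd : T.depth v = 0
  · exact (T.depth_eq_zero).mp hd
  · have hiter : ∀ q : ℕ, T.parent^[m * q] v = v := by
      intro q
      induction q with
      | zero => simp
      | succ n ih =>
        rw [Nat.mul_succ, Function.iterate_add_apply, h, ih]
    have hge : T.depth v ≤ m * T.depth v := Nat.le_mul_of_pos_left _ (Nat.pos_of_ne_zero hm)
    have := T.iterate_of_depth_le hge
    rw [hiter (T.depth v)] at this
    exact this

lemma depth_add_of_anc {u z : V} {j : ℕ} (hj : T.parent^[j] z = u) (hu : u ≠ T.root) :
    T.depth z = j + T.depth u := by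
  have hle : T.depth z ≤ T.depth u + j :=
    Nat.find_min' (T.reaches_root z)
      (by rw [Function.iterate_add_apply, hj, iterate_depth])
  have hjlt : j < T.depth z := by
    by_contra hcon
    push_neg at hcon
    exact hu (hj ▸ T.iterate_of_depth_le hcon)
  have h2 : T.depth u ≤ T.depth z - j := by
    apply Nat.find_min'
    show T.parent^[T.depth z - j] u = T.root
    rw [← hj, ← Function.iterate_add_apply]
    rw [Nat.sub_add_cancel (le_of_lt hjlt)]
    exact T.iterate_depth z
  omega

lemma depth_lt_of_strict_anc {u z : V} (hu : T.isAnc u z) (hne : z ≠ u) (hur : u ≠ T.root) :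
    T.depth u < T.depth z := by
  obtain ⟨j, hj⟩ := hu
  have hj0 : j ≠ 0 := by rintro rfl; exact hne (by simpa using hj)
  have := T.depth_add_of_anc hj hur
  omega

lemma depth_parent {x : V} (hx : x ≠ T.root) : T.depth x = T.depth (T.parent x) + 1 := by
  have hd0 : T.depth x ≠ 0 := fun h => hx (T.depth_eq_zero.mp h)
  have h1 : T.depth x ≤ T.depth (T.parent x) + 1 :=
    Nat.find_min' (T.reaches_root x)
      (by rw [Function.iterate_succ_apply, iterate_depth])
  have h2 : T.depth (T.parent x) ≤ T.depth x - 1 := by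
    apply Nat.find_min'
    show T.parent^[T.depth x - 1] (T.parent x) = T.root
    have h3 := T.iterate_depth x
    rwa [show T.depth x = (T.depth x - 1) + 1 by omega, Function.iterate_succ_apply] at h3
  omega

lemma isAnc_refl (x : V) : T.isAnc x x := ⟨0, rfl⟩

lemma isAnc_parent_iff {x u : V} (hx : x ≠ T.root) :
    T.isAnc u (T.parent x) ↔ T.isAnc u x ∧ u ≠ x := by
  constructor
  · rintro ⟨k, hk⟩
    refine ⟨⟨k + 1, by rwa [Function.iterate_succ_apply]⟩, ?_⟩
    rintro rfl
    exact hx (T.eq_root_of_cycle (Nat.succ_ne_zero k) (by rwa [Function.iterate_succ_apply]))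
  · rintro ⟨⟨k, hk⟩, hne⟩
    cases k with
    | zero => exact absurd hk.symm hne
    | succ n => exact ⟨n, by rwa [Function.iterate_succ_apply] at hk⟩

noncomputable def anc01 (u x : V) : ℝ := if T.isAnc u x then 1 else 0

lemma anc01_nonneg (u x : V) : 0 ≤ T.anc01 u x := by
  unfold anc01; split <;> norm_num

lemma treeDist_eq (x z : V) :
    T.treeDist x z = ∑ u ∈ Finset.univ.filter (fun u => u ≠ T.root),
      T.wt u * |T.anc01 u x - T.anc01 u z| := by
  classical
  rw [treeDist]
  rw [show ((T.pathEdges x \ T.pathEdges z) ∪ (T.pathEdges z \ T.pathEdges x))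
      = (Finset.univ.filter (fun u => u ≠ T.root)).filter
        (fun u => (T.isAnc u x ∧ ¬ T.isAnc u z) ∨ (T.isAnc u z ∧ ¬ T.isAnc u x)) by
    ext u
    simp only [Finset.mem_union, Finset.mem_sdiff, Finset.mem_filter, pathEdges,
      Finset.mem_univ, true_and]
    tauto]
  rw [Finset.sum_filter]
  apply Finset.sum_congr rfl
  intro u _
  unfold anc01
  by_cases h1 : T.isAnc u x <;> by_cases h2 : T.isAnc u z <;> simp [h1, h2]

lemma treeDist_symm (x z : V) : T.treeDist x z = T.treeDist z x := by
  rw [treeDist, treeDist, Finset.union_comm]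

lemma treeDist_self (x : V) : T.treeDist x x = 0 := by
  rw [treeDist]
  simp

lemma treeDist_le_parent {x : V} (hx : x ≠ T.root) (z : V) :
    T.treeDist x z ≤ T.wt x + T.treeDist (T.parent x) z := by
  rw [treeDist_eq, treeDist_eq]
  have hxE : x ∈ Finset.univ.filter (fun u => u ≠ T.root) := by simp [hx]
  rw [← Finset.sum_erase_add _ _ hxE, ← Finset.sum_erase_add _ _ hxE]
  have hS : ∑ u ∈ (Finset.univ.filter (fun u => u ≠ T.root)).erase x,
      T.wt u * |T.anc01 u x - T.anc01 u z|
      = ∑ u ∈ (Finset.univ.filter (fun u => u ≠ T.root)).erase x,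
      T.wt u * |T.anc01 u (T.parent x) - T.anc01 u z| := by
    apply Finset.sum_congr rfl
    intro u hu
    have hux : u ≠ x := (Finset.mem_erase.mp hu).1
    have : T.anc01 u (T.parent x) = T.anc01 u x := by
      unfold anc01
      rw [T.isAnc_parent_iff hx]
      by_cases h : T.isAnc u x <;> simp [h, hux]
    rw [this]
  rw [hS]
  have h1 : T.wt x * |T.anc01 x x - T.anc01 x z| ≤ T.wt x := by
    have hgx : T.anc01 x x = 1 := by unfold anc01; simp [T.isAnc_refl]
    have : |T.anc01 x x - T.anc01 x z| ≤ 1 := by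
      rw [hgx]; unfold anc01; split <;> norm_num
    calc T.wt x * |T.anc01 x x - T.anc01 x z| ≤ T.wt x * 1 :=
          mul_le_mul_of_nonneg_left this (T.wt_nonneg x)
      _ = T.wt x := mul_one _
  have h2 : 0 ≤ T.wt x * |T.anc01 x (T.parent x) - T.anc01 x z| :=
    mul_nonneg (T.wt_nonneg x) (abs_nonneg _)
  linarith

lemma subtreeMass_eq (μ : V → ℝ) (u : V) :
    T.subtreeMass μ u = ∑ x, T.anc01 u x * μ x := by
  rw [subtreeMass, Finset.sum_filter]
  apply Finset.sum_congr rfl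
  intro x _
  unfold anc01
  split <;> simp

lemma TW_le_cost (μ ν : V → ℝ) (π : V → V → ℝ) (hπ0 : ∀ x z, 0 ≤ π x z)
    (hrow : ∀ x, ∑ z, π x z = μ x) (hcol : ∀ z, ∑ x, π x z = ν z) :
    T.TW μ ν ≤ ∑ x, ∑ z, T.treeDist x z * π x z := by
  classical
  have hrhs : ∑ x, ∑ z, T.treeDist x z * π x z
      = ∑ u ∈ Finset.univ.filter (fun u => u ≠ T.root), ∑ x, ∑ z,
        T.wt u * (|T.anc01 u x - T.anc01 u z| * π x z) := by
    have step1 : ∑ x, ∑ z, T.treeDist x z * π x z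
        = ∑ x, ∑ u ∈ Finset.univ.filter (fun u => u ≠ T.root), ∑ z,
          T.wt u * (|T.anc01 u x - T.anc01 u z| * π x z) := by
      apply Finset.sum_congr rfl
      intro x _
      rw [Finset.sum_comm]
      apply Finset.sum_congr rfl
      intro z _
      rw [treeDist_eq, Finset.sum_mul]
      apply Finset.sum_congr rfl
      intro u _
      ring
    rw [step1, Finset.sum_comm]
  rw [hrhs, TW]
  apply Finset.sum_le_sum
  intro u _
  have hmass : T.subtreeMass μ u - T.subtreeMass ν u
      = ∑ x, ∑ z, (T.anc01 u x - T.anc01 u z) * π x z := by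
    have h1 : ∑ x, ∑ z, T.anc01 u x * π x z = T.subtreeMass μ u := by
      rw [subtreeMass_eq]
      apply Finset.sum_congr rfl
      intro x _
      rw [← Finset.mul_sum, hrow]
    have h2 : ∑ x, ∑ z, T.anc01 u z * π x z = T.subtreeMass ν u := by
      rw [Finset.sum_comm, subtreeMass_eq]
      apply Finset.sum_congr rfl
      intro z _
      rw [← Finset.mul_sum, hcol]
    calc T.subtreeMass μ u - T.subtreeMass ν u
        = ∑ x, ∑ z, T.anc01 u x * π x z - ∑ x, ∑ z, T.anc01 u z * π x z := by rw [h1, h2]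
      _ = ∑ x, ∑ z, (T.anc01 u x - T.anc01 u z) * π x z := by
          rw [← Finset.sum_sub_distrib]
          apply Finset.sum_congr rfl
          intro x _
          rw [← Finset.sum_sub_distrib]
          apply Finset.sum_congr rfl
          intro z _
          ring
  have habs : |T.subtreeMass μ u - T.subtreeMass ν u|
      ≤ ∑ x, ∑ z, |T.anc01 u x - T.anc01 u z| * π x z := by
    rw [hmass]
    calc |∑ x, ∑ z, (T.anc01 u x - T.anc01 u z) * π x z|
        ≤ ∑ x, |∑ z, (T.anc01 u x - T.anc01 u z) * π x z| := Finset.abs_sum_le_sum_abs _ _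
      _ ≤ ∑ x, ∑ z, |T.anc01 u x - T.anc01 u z| * π x z := by
          apply Finset.sum_le_sum
          intro x _
          calc |∑ z, (T.anc01 u x - T.anc01 u z) * π x z|
              ≤ ∑ z, |(T.anc01 u x - T.anc01 u z) * π x z| := Finset.abs_sum_le_sum_abs _ _
            _ = ∑ z, |T.anc01 u x - T.anc01 u z| * π x z := by
                apply Finset.sum_congr rfl
                intro z _
                rw [abs_mul, abs_of_nonneg (hπ0 x z)]
  calc T.wt u * |T.subtreeMass μ u - T.subtreeMass ν u|
      ≤ T.wt u * ∑ x, ∑ z, |T.anc01 u x - T.anc01 u z| * π x z :=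
        mul_le_mul_of_nonneg_left habs (T.wt_nonneg u)
    _ = ∑ x, ∑ z, T.wt u * (|T.anc01 u x - T.anc01 u z| * π x z) := by
        rw [Finset.mul_sum]
        apply Finset.sum_congr rfl
        intro x _
        rw [Finset.mul_sum]

lemma TW_nonneg (μ ν : V → ℝ) : 0 ≤ T.TW μ ν := by
  apply Finset.sum_nonneg
  intro u _
  exact mul_nonneg (T.wt_nonneg u) (abs_nonneg _)

def goodCoupling (μ ν : V → ℝ) : Prop :=
  ∃ π : V → V → ℝ, (∀ x z, 0 ≤ π x z) ∧ (∀ x, ∑ z, π x z = μ x) ∧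
    (∀ z, ∑ x, π x z = ν z) ∧ ∑ x, ∑ z, T.treeDist x z * π x z ≤ T.TW μ ν

lemma TW_symm (μ ν : V → ℝ) : T.TW μ ν = T.TW ν μ := by
  unfold TW
  apply Finset.sum_congr rfl
  intro u _
  rw [abs_sub_comm]

lemma goodCoupling_symm {μ ν : V → ℝ} (h : T.goodCoupling ν μ) : T.goodCoupling μ ν := by
  obtain ⟨π, h0, hr, hc, hcost⟩ := h
  refine ⟨fun x z => π z x, fun x z => h0 z x, hc, hr, ?_⟩
  have : ∑ x, ∑ z, T.treeDist x z * π z x = ∑ x, ∑ z, T.treeDist x z * π x z := by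
    rw [Finset.sum_comm]
    apply Finset.sum_congr rfl
    intro x _
    apply Finset.sum_congr rfl
    intro z _
    rw [treeDist_symm]
  rw [this, ← TW_symm]
  exact hcost

lemma goodCoupling_of_eq {μ ν : V → ℝ} (hμ0 : ∀ x, 0 ≤ μ x) (h : ∀ x, μ x = ν x) :
    T.goodCoupling μ ν := by
  classical
  refine ⟨fun x z => if x = z then μ x else 0, ?_, ?_, ?_, ?_⟩
  · intro x z
    dsimp only
    split
    · exact hμ0 x
    · exact le_refl 0
  · intro x
    simp
  · intro z
    have : ∀ x : V, (if x = z then μ x else 0) = (if x = z then μ z else 0) := by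
      intro x; split <;> simp_all
    simp only [this]
    rw [Finset.sum_ite_eq' Finset.univ z (fun _ => μ z)]
    simp [h z]
  · have hz : ∀ x : V, ∑ z, T.treeDist x z * (if x = z then μ x else 0) = 0 := by
      intro x
      rw [Finset.sum_eq_single x]
      · rw [treeDist_self]; ring
      · intro b _ hb
        simp [Ne.symm hb]
      · simp
    have : ∑ x : V, ∑ z : V, T.treeDist x z * (if x = z then μ x else 0) = 0 :=
      Finset.sum_eq_zero fun x _ => hz x
    dsimp only
    rw [this]
    exact T.TW_nonneg μ ν

lemma exists_suballoc (f : V → ℝ) (hf : ∀ z, 0 ≤ f z) (ε : ℝ) (hε : 0 ≤ ε)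
    (hle : ε ≤ ∑ z, f z) :
    ∃ ρ : V → ℝ, (∀ z, 0 ≤ ρ z) ∧ (∀ z, ρ z ≤ f z) ∧ ∑ z, ρ z = ε := by
  by_cases hS : ∑ z, f z = 0
  · refine ⟨fun _ => 0, fun z => le_refl 0, hf, ?_⟩
    simp
    linarith
  · have hSpos : 0 < ∑ z, f z :=
      lt_of_le_of_ne (Finset.sum_nonneg fun z _ => hf z) (Ne.symm hS)
    refine ⟨fun z => f z * (ε / ∑ w, f w), ?_, ?_, ?_⟩
    · intro z
      exact mul_nonneg (hf z) (div_nonneg hε (le_of_lt hSpos))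
    · intro z
      have h1 : ε / ∑ w, f w ≤ 1 := (div_le_one hSpos).mpr hle
      calc f z * (ε / ∑ w, f w) ≤ f z * 1 := mul_le_mul_of_nonneg_left h1 (hf z)
        _ = f z := mul_one _
    · rw [← Finset.sum_mul]
      field_simp

noncomputable def Nm (μ ν : V → ℝ) : ℕ :=
  ∑ w ∈ Finset.univ.filter (fun w => μ w ≠ ν w), (T.depth w + 1)

lemma Nm_symm (μ ν : V → ℝ) : T.Nm μ ν = T.Nm ν μ := by
  unfold Nm
  apply Finset.sum_congr _ (fun _ _ => rfl)
  apply Finset.filter_congr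
  intro w _
  simp [ne_comm]

lemma step_good (n : ℕ)
    (IH : ∀ μ ν : V → ℝ, (∀ x, 0 ≤ μ x) → (∑ x, μ x = 1) → (∀ x, 0 ≤ ν x) → (∑ x, ν x = 1) →
      T.Nm μ ν ≤ n → T.goodCoupling μ ν)
    (μ ν : V → ℝ) (hμ0 : ∀ x, 0 ≤ μ x) (hμ1 : ∑ x, μ x = 1)
    (hν0 : ∀ x, 0 ≤ ν x) (hν1 : ∑ x, ν x = 1)
    (hn : T.Nm μ ν ≤ n + 1)
    (x : V) (hxF : μ x ≠ ν x)
    (hmax : ∀ w, μ w ≠ ν w → T.depth w ≤ T.depth x)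
    (hpos : ν x < μ x) : T.goodCoupling μ ν := by
  classical
  have hxroot : x ≠ T.root := by
    rintro rfl
    have hother : ∀ w, w ≠ T.root → μ w = ν w := by
      intro w hw
      by_contra hww
      have h1 := hmax w hww
      have hdx : T.depth (T.root : V) = 0 := T.depth_eq_zero.mpr rfl
      have h2 : T.depth w = 0 := by omega
      exact hw (T.depth_eq_zero.mp h2)
    have hsum : ∑ w, (μ w - ν w) = μ T.root - ν T.root :=
      Finset.sum_eq_single T.root
        (fun b _ hb => by rw [hother b hb]; ring) (by simp)
    rw [Finset.sum_sub_distrib, hμ1, hν1] at hsum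
    exact hxF (by linarith)
  have hpx : T.parent x ≠ x := by
    intro h
    exact hxroot (T.eq_root_of_cycle one_ne_zero (by simpa using h))
  set ε := μ x - ν x with hε
  have hεpos : 0 < ε := by rw [hε]; linarith
  set μ' : V → ℝ := fun w => if w = x then ν x else if w = T.parent x then μ (T.parent x) + ε else μ w
    with hμ'
  have hμ'x : μ' x = ν x := by simp [hμ']
  have hμ'p : μ' (T.parent x) = μ (T.parent x) + ε := by simp [hμ', hpx]
  have hμ'other : ∀ w, w ≠ x → w ≠ T.parent x → μ' w = μ w := by
    intro w h1 h2; simp [hμ', h1, h2]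
  have hdiff : ∀ w, μ' w - μ w = (if w = x then -ε else 0) + (if w = T.parent x then ε else 0) := by
    intro w
    by_cases h1 : w = x
    · subst h1
      rw [hμ'x, if_pos rfl, if_neg (Ne.symm hpx), hε]
      ring
    · by_cases h2 : w = T.parent x
      · subst h2
        rw [hμ'p, if_neg h1, if_pos rfl]
        ring
      · rw [hμ'other w h1 h2, if_neg h1, if_neg h2]
        ring
  have hμ'0 : ∀ w, 0 ≤ μ' w := by
    intro w
    by_cases h1 : w = x
    · rw [h1, hμ'x]; exact hν0 x
    · by_cases h2 : w = T.parent x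
      · rw [h2, hμ'p]; have := hμ0 (T.parent x); linarith
      · rw [hμ'other w h1 h2]; exact hμ0 w
  have hμ'1 : ∑ w, μ' w = 1 := by
    have h0 : ∑ w, (μ' w - μ w) = 0 := by
      rw [Finset.sum_congr rfl (fun w _ => hdiff w), Finset.sum_add_distrib,
        Finset.sum_ite_eq' Finset.univ x (fun _ => -ε),
        Finset.sum_ite_eq' Finset.univ (T.parent x) (fun _ => ε)]
      simp
    rw [Finset.sum_sub_distrib, hμ1] at h0
    linarith
  have hMdiff : ∀ u, T.subtreeMass μ' u - T.subtreeMass μ u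
      = (if T.isAnc u x then -ε else 0) + (if T.isAnc u (T.parent x) then ε else 0) := by
    intro u
    rw [subtreeMass, subtreeMass, ← Finset.sum_sub_distrib,
      Finset.sum_congr rfl (fun w _ => hdiff w), Finset.sum_add_distrib,
      Finset.sum_ite_eq' _ x (fun _ => -ε), Finset.sum_ite_eq' _ (T.parent x) (fun _ => ε)]
    simp [Finset.mem_filter]
  have hMeq : ∀ u, u ≠ x → T.subtreeMass μ' u = T.subtreeMass μ u := by
    intro u hu
    have h := hMdiff u
    by_cases ha : T.isAnc u x
    · rw [if_pos ha, if_pos ((T.isAnc_parent_iff hxroot).mpr ⟨ha, hu⟩)] at h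
      linarith
    · have hnp : ¬ T.isAnc u (T.parent x) := fun hc => ha ((T.isAnc_parent_iff hxroot).mp hc).1
      rw [if_neg ha, if_neg hnp] at h
      linarith
  have hMx : T.subtreeMass μ' x = T.subtreeMass μ x - ε := by
    have h := hMdiff x
    have hnp : ¬ T.isAnc x (T.parent x) := fun hc => ((T.isAnc_parent_iff hxroot).mp hc).2 rfl
    rw [if_pos (T.isAnc_refl x), if_neg hnp] at h
    linarith
  have hMxν : T.subtreeMass μ x - T.subtreeMass ν x = ε := by
    rw [subtreeMass, subtreeMass, ← Finset.sum_sub_distrib, hε]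
    apply Finset.sum_eq_single x
    · intro b hb hbx
      have hanc : T.isAnc x b := (Finset.mem_filter.mp hb).2
      have hlt : T.depth x < T.depth b := T.depth_lt_of_strict_anc hanc hbx hxroot
      have heq : μ b = ν b := by
        by_contra hne
        have := hmax b hne
        omega
      rw [heq]; ring
    · intro hx
      exact absurd (Finset.mem_filter.mpr ⟨Finset.mem_univ x, T.isAnc_refl x⟩) hx
  have hxE : x ∈ Finset.univ.filter (fun u => u ≠ T.root) := by simp [hxroot]
  have hTW : T.TW μ ν = T.TW μ' ν + T.wt x * ε := by
    rw [TW, TW, ← Finset.sum_erase_add _ _ hxE, ← Finset.sum_erase_add _ _ hxE]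
    have herase : ∑ u ∈ (Finset.univ.filter (fun u => u ≠ T.root)).erase x,
        T.wt u * |T.subtreeMass μ' u - T.subtreeMass ν u|
        = ∑ u ∈ (Finset.univ.filter (fun u => u ≠ T.root)).erase x,
        T.wt u * |T.subtreeMass μ u - T.subtreeMass ν u| := by
      apply Finset.sum_congr rfl
      intro u hu
      rw [hMeq u (Finset.mem_erase.mp hu).1]
    rw [herase]
    have h1 : |T.subtreeMass μ x - T.subtreeMass ν x| = ε := by
      rw [hMxν]; exact abs_of_pos hεpos
    have h2 : |T.subtreeMass μ' x - T.subtreeMass ν x| = 0 := by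
      rw [hMx]
      have : T.subtreeMass μ x - ε - T.subtreeMass ν x = 0 := by linarith
      rw [this, abs_zero]
    rw [h1, h2]
    ring
  have hxFmem : x ∈ Finset.univ.filter (fun w => μ w ≠ ν w) := by simp [hxF]
  have hNm' : T.Nm μ' ν ≤ n := by
    have hsub : Finset.univ.filter (fun w => μ' w ≠ ν w)
        ⊆ insert (T.parent x) ((Finset.univ.filter (fun w => μ w ≠ ν w)).erase x) := by
      intro w hw
      simp only [Finset.mem_filter, Finset.mem_univ, true_and] at hw
      by_cases h1 : w = x
      · subst h1; exact absurd hμ'x hw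
      · by_cases h2 : w = T.parent x
        · subst h2; exact Finset.mem_insert_self _ _
        · apply Finset.mem_insert_of_mem
          rw [Finset.mem_erase]
          refine ⟨h1, Finset.mem_filter.mpr ⟨Finset.mem_univ w, ?_⟩⟩
          rwa [← hμ'other w h1 h2]
    have hle1 : T.Nm μ' ν ≤ ∑ w ∈ insert (T.parent x)
        ((Finset.univ.filter (fun w => μ w ≠ ν w)).erase x), (T.depth w + 1) :=
      Finset.sum_le_sum_of_subset hsub
    have hle2 : ∑ w ∈ insert (T.parent x)
        ((Finset.univ.filter (fun w => μ w ≠ ν w)).erase x), (T.depth w + 1)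
        ≤ (T.depth (T.parent x) + 1)
          + ∑ w ∈ (Finset.univ.filter (fun w => μ w ≠ ν w)).erase x, (T.depth w + 1) := by
      by_cases hmem : T.parent x ∈ (Finset.univ.filter (fun w => μ w ≠ ν w)).erase x
      · rw [Finset.insert_eq_self.mpr hmem]
        omega
      · rw [Finset.sum_insert hmem]
    have hNmsplit : T.Nm μ ν = (T.depth x + 1)
        + ∑ w ∈ (Finset.univ.filter (fun w => μ w ≠ ν w)).erase x, (T.depth w + 1) :=
      (Finset.add_sum_erase _ _ hxFmem).symm
    have hdp : T.depth x = T.depth (T.parent x) + 1 := T.depth_parent hxroot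
    omega
  obtain ⟨π', hπ'0, hrow', hcol', hcost'⟩ := IH μ' ν hμ'0 hμ'1 hν0 hν1 hNm'
  obtain ⟨ρ, hρ0, hρle, hρsum⟩ := exists_suballoc (fun z => π' (T.parent x) z)
    (fun z => hπ'0 _ z) ε (le_of_lt hεpos)
    (by rw [hrow', hμ'p]; have := hμ0 (T.parent x); linarith)
  set π : V → V → ℝ := fun a z =>
    π' a z + (if a = x then ρ z else 0) - (if a = T.parent x then ρ z else 0) with hπdef
  have hπval : ∀ a z, π a z
      = π' a z + (if a = x then ρ z else 0) - (if a = T.parent x then ρ z else 0) :=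
    fun a z => rfl
  have hπ0 : ∀ a z, 0 ≤ π a z := by
    intro a z
    rw [hπval]
    by_cases h1 : a = x
    · have h2 : a ≠ T.parent x := by rw [h1]; exact Ne.symm hpx
      rw [if_pos h1, if_neg h2]
      have := hπ'0 a z
      have := hρ0 z
      linarith
    · by_cases h2 : a = T.parent x
      · rw [if_neg h1, if_pos h2, h2]
        have := hρle z
        linarith
      · rw [if_neg h1, if_neg h2]
        have := hπ'0 a z
        linarith
  have hsum_ite_x : ∀ (g : V → ℝ) (a : V), ∑ z, (if a = x then g z else 0)
      = if a = x then ∑ z, g z else 0 := by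
    intro g a
    split <;> simp
  have hrow : ∀ a, ∑ z, π a z = μ a := by
    intro a
    have hexp : ∑ z, π a z = (∑ z, π' a z) + (if a = x then ε else 0)
        - (if a = T.parent x then ε else 0) := by
      rw [hπdef]
      simp only
      rw [Finset.sum_sub_distrib, Finset.sum_add_distrib]
      congr 1
      · congr 1
        rw [hsum_ite_x ρ a, hρsum]
      · have : ∀ b : V, ∑ z, (if a = b then ρ z else 0) = if a = b then ε else 0 := by
          intro b; split <;> simp [hρsum]
        exact this (T.parent x)
    rw [hexp, hrow']
    by_cases h1 : a = x
    · subst h1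
      rw [if_pos rfl, if_neg (Ne.symm hpx), hμ'x, hε]
      ring
    · by_cases h2 : a = T.parent x
      · subst h2
        rw [if_neg h1, if_pos rfl, hμ'p]
        ring
      · rw [if_neg h1, if_neg h2, hμ'other a h1 h2]
        ring
  have hcol : ∀ z, ∑ a, π a z = ν z := by
    intro z
    rw [hπdef]
    simp only
    rw [Finset.sum_sub_distrib, Finset.sum_add_distrib,
      Finset.sum_ite_eq' Finset.univ x (fun _ => ρ z),
      Finset.sum_ite_eq' Finset.univ (T.parent x) (fun _ => ρ z), hcol' z]
    simp
  have hcostπ : ∑ a, ∑ z, T.treeDist a z * π a z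
      = (∑ a, ∑ z, T.treeDist a z * π' a z) + ∑ z, T.treeDist x z * ρ z
        - ∑ z, T.treeDist (T.parent x) z * ρ z := by
    have hinner : ∀ a, ∑ z, T.treeDist a z * π a z
        = (∑ z, T.treeDist a z * π' a z) + (if a = x then ∑ z, T.treeDist x z * ρ z else 0)
          - (if a = T.parent x then ∑ z, T.treeDist (T.parent x) z * ρ z else 0) := by
      intro a
      have hpt : ∀ z, T.treeDist a z * π a z = T.treeDist a z * π' a z
          + (if a = x then T.treeDist x z * ρ z else 0)
          - (if a = T.parent x then T.treeDist (T.parent x) z * ρ z else 0) := by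
        intro z
        rw [hπval]
        by_cases h1 : a = x
        · have h2 : a ≠ T.parent x := by rw [h1]; exact Ne.symm hpx
          rw [if_pos h1, if_neg h2, if_pos h1, if_neg h2, h1]
          ring
        · by_cases h2 : a = T.parent x
          · rw [if_neg h1, if_pos h2, if_neg h1, if_pos h2, h2]
            ring
          · rw [if_neg h1, if_neg h2, if_neg h1, if_neg h2]
            ring
      rw [Finset.sum_congr rfl (fun z _ => hpt z), Finset.sum_sub_distrib,
        Finset.sum_add_distrib]
      congr 1
      · congr 1
        split <;> simp
      · split <;> simp
    rw [Finset.sum_congr rfl (fun a _ => hinner a), Finset.sum_sub_distrib,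
      Finset.sum_add_distrib,
      Finset.sum_ite_eq' Finset.univ x (fun _ => ∑ z, T.treeDist x z * ρ z),
      Finset.sum_ite_eq' Finset.univ (T.parent x)
        (fun _ => ∑ z, T.treeDist (T.parent x) z * ρ z)]
    simp
  have hbound : ∑ z, T.treeDist x z * ρ z
      ≤ T.wt x * ε + ∑ z, T.treeDist (T.parent x) z * ρ z := by
    have hstep : ∀ z, T.treeDist x z * ρ z
        ≤ (T.wt x + T.treeDist (T.parent x) z) * ρ z := fun z =>
      mul_le_mul_of_nonneg_right (T.treeDist_le_parent hxroot z) (hρ0 z)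
    calc ∑ z, T.treeDist x z * ρ z
        ≤ ∑ z, (T.wt x + T.treeDist (T.parent x) z) * ρ z :=
          Finset.sum_le_sum fun z _ => hstep z
      _ = T.wt x * (∑ z, ρ z) + ∑ z, T.treeDist (T.parent x) z * ρ z := by
          rw [Finset.mul_sum, ← Finset.sum_add_distrib]
          apply Finset.sum_congr rfl
          intro z _
          ring
      _ = T.wt x * ε + ∑ z, T.treeDist (T.parent x) z * ρ z := by rw [hρsum]
  refine ⟨π, hπ0, hrow, hcol, ?_⟩
  rw [hcostπ, hTW]
  linarith

lemma exists_good (n : ℕ) : ∀ μ ν : V → ℝ, (∀ x, 0 ≤ μ x) → (∑ x, μ x = 1) →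
    (∀ x, 0 ≤ ν x) → (∑ x, ν x = 1) → T.Nm μ ν ≤ n → T.goodCoupling μ ν := by
  induction n with
  | zero =>
    intro μ ν hμ0 hμ1 hν0 hν1 hn
    apply T.goodCoupling_of_eq hμ0
    intro w
    by_contra hw
    have hmem : w ∈ Finset.univ.filter (fun w => μ w ≠ ν w) := by simp [hw]
    have := Finset.single_le_sum (f := fun w => T.depth w + 1)
      (fun _ _ => Nat.zero_le _) hmem
    have hNm : T.depth w + 1 ≤ T.Nm μ ν := this
    omega
  | succ n ihn =>
    intro μ ν hμ0 hμ1 hν0 hν1 hn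
    by_cases hF : Finset.univ.filter (fun w => μ w ≠ ν w) = ∅
    · apply T.goodCoupling_of_eq hμ0
      intro w
      by_contra hw
      have hmem : w ∈ Finset.univ.filter (fun w => μ w ≠ ν w) := by simp [hw]
      rw [hF] at hmem
      exact absurd hmem (Finset.notMem_empty w)
    · obtain ⟨x, hxmem, hxmax⟩ := Finset.exists_max_image
        (Finset.univ.filter (fun w => μ w ≠ ν w)) (fun w => T.depth w)
        (Finset.nonempty_of_ne_empty hF)
      have hxne : μ x ≠ ν x := (Finset.mem_filter.mp hxmem).2
      rcases lt_trichotomy (ν x) (μ x) with hlt | heq | hgt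
      · exact T.step_good n ihn μ ν hμ0 hμ1 hν0 hν1 hn x hxne
          (fun w hw => hxmax w (by simp [hw])) hlt
      · exact absurd heq.symm hxne
      · apply T.goodCoupling_symm
        exact T.step_good n ihn ν μ hν0 hν1 hμ0 hμ1 (by rw [T.Nm_symm ν μ]; exact hn) x
          (Ne.symm hxne) (fun w hw => hxmax w (by simp [Ne.symm hw])) hgt

end WTree

open Classical
/-- For probability measures `μ, ν` on the nodes of a rooted tree `T`
with non-negative edge lengths, the 1-Wasserstein distance with ground metric the
tree metric `d_T` equals `∑_e w_e |μ(Γ(v_e)) - ν(Γ(v_e))|`. -/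
theorem tree_wasserstein_closed_form {V : Type} [Fintype V] (T : WTree V)
    (μ ν : V → ℝ) (hμ0 : ∀ x, 0 ≤ μ x) (hμ1 : ∑ x, μ x = 1)
    (hν0 : ∀ x, 0 ≤ ν x) (hν1 : ∑ x, ν x = 1) :
    sInf {c : ℝ | ∃ π : V → V → ℝ,
        (∀ x z, 0 ≤ π x z) ∧
        (∀ x, ∑ z, π x z = μ x) ∧
        (∀ z, ∑ x, π x z = ν z) ∧
        c = ∑ x, ∑ z, T.treeDist x z * π x z} =
      ∑ u ∈ Finset.univ.filter (fun u => u ≠ T.root),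
        T.wt u * |T.subtreeMass μ u - T.subtreeMass ν u| := by
  classical
  show sInf _ = T.TW μ ν
  have hne : {c : ℝ | ∃ π : V → V → ℝ,
      (∀ x z, 0 ≤ π x z) ∧ (∀ x, ∑ z, π x z = μ x) ∧ (∀ z, ∑ x, π x z = ν z) ∧
      c = ∑ x, ∑ z, T.treeDist x z * π x z}.Nonempty := by
    refine ⟨_, fun x z => μ x * ν z, ?_, ?_, ?_, rfl⟩
    · intro x z; exact mul_nonneg (hμ0 x) (hν0 z)
    · intro x; rw [← Finset.mul_sum, hν1, mul_one]
    · intro z; rw [← Finset.sum_mul, hμ1, one_mul]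
  have hlb : ∀ c ∈ {c : ℝ | ∃ π : V → V → ℝ,
      (∀ x z, 0 ≤ π x z) ∧ (∀ x, ∑ z, π x z = μ x) ∧ (∀ z, ∑ x, π x z = ν z) ∧
      c = ∑ x, ∑ z, T.treeDist x z * π x z}, T.TW μ ν ≤ c := by
    rintro c ⟨π, h0, hr, hc, rfl⟩
    exact T.TW_le_cost μ ν π h0 hr hc
  obtain ⟨π, h0, hr, hc, hcost⟩ := T.exists_good (T.Nm μ ν) μ ν hμ0 hμ1 hν0 hν1 le_rfl
  apply le_antisymm
  · exact csInf_le_of_le ⟨T.TW μ ν, hlb⟩ ⟨π, h0, hr, hc, rfl⟩ hcost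
  · exact le_csInf hne hlb
end

section
/- The tree-Wasserstein distance W_{d_T} is a negative definite kernel on the set of probability measures supported on the nodes of a fixed rooted tree T with non-negative edge lengths: for any n ≥ 2, measures μ_1,…,μ_n, and reals c_1,…,c_n with Σ c_i = 0, one has Σ_{i,j} c_i c_j W_{d_T}(μ_i, μ_j) ≤ 0. -/
/-!
`TW μ ν` is a nonnegative combination, over the edges `u`, of `|m_u μ - m_u ν|`, where `m_u` is
the mass of the subtree below `u`. So it suffices that `|a - b|` is negative definite on `ℝ`. This
holds because `|a - b| = ‖1_{[a,∞)} - 1_{[b,∞)}‖²` in `L²(ℝ)`, and for `∑ cᵢ = 0` the quadratic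
form of a squared distance is `∑ᵢⱼ cᵢ cⱼ (xᵢ - xⱼ)² = -2 (∑ᵢ cᵢ xᵢ)² ≤ 0`.
-/

open Finset

open Classical

/-- A symmetric kernel `k` is negative definite. -/
def NegDefKernel {X : Type} (k : X → X → ℝ) : Prop :=
  ∀ (n : ℕ), 2 ≤ n → ∀ (x : Fin n → X) (c : Fin n → ℝ),
    (∑ i, c i) = 0 → ∑ i, ∑ j, c i * c j * k (x i) (x j) ≤ 0

namespace NegDefKernel

variable {X Y : Type}

theorem comp {k : X → X → ℝ} (hk : NegDefKernel k) (f : Y → X) :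
    NegDefKernel (fun y y' => k (f y) (f y')) :=
  fun n hn y c hc => hk n hn (f ∘ y) c hc

theorem const_mul {k : X → X → ℝ} (hk : NegDefKernel k) {a : ℝ} (ha : 0 ≤ a) :
    NegDefKernel (fun x x' => a * k x x') := by
  intro n hn x c hc
  have hform : ∑ i, ∑ j, c i * c j * (a * k (x i) (x j))
      = a * ∑ i, ∑ j, c i * c j * k (x i) (x j) := by
    simp only [Finset.mul_sum]
    exact Finset.sum_congr rfl fun i _ => Finset.sum_congr rfl fun j _ => by ring
  rw [hform]
  exact mul_nonpos_of_nonneg_of_nonpos ha (hk n hn x c hc)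

theorem finset_sum {ι : Type} {s : Finset ι} {k : ι → X → X → ℝ}
    (hk : ∀ u ∈ s, NegDefKernel (k u)) :
    NegDefKernel (fun x x' => ∑ u ∈ s, k u x x') := by
  intro n hn x c hc
  have hform : ∑ i, ∑ j, c i * c j * ∑ u ∈ s, k u (x i) (x j)
      = ∑ u ∈ s, ∑ i, ∑ j, c i * c j * k u (x i) (x j) := by
    simp only [Finset.mul_sum]
    exact (Finset.sum_congr rfl fun i _ => Finset.sum_comm).trans Finset.sum_comm
  rw [hform]
  exact Finset.sum_nonpos fun u hu => hk u hu n hn x c hc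

end NegDefKernel

theorem sum_sum_mul_mul_sub_sq {n : ℕ} (c x : Fin n → ℝ) (hc : ∑ i, c i = 0) :
    ∑ i, ∑ j, c i * c j * (x i - x j) ^ 2 = -2 * (∑ i, c i * x i) ^ 2 := by
  have hexpand : ∀ i j, c i * c j * (x i - x j) ^ 2
      = (c i * x i ^ 2) * c j - 2 * ((c i * x i) * (c j * x j)) + c i * (c j * x j ^ 2) :=
    fun i j => by ring
  simp only [hexpand, Finset.sum_add_distrib, Finset.sum_sub_distrib, ← Finset.mul_sum,
    ← Finset.sum_mul, hc, mul_zero, zero_mul, Finset.sum_const_zero]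
  ring

section AbsSub

open MeasureTheory

theorem indicator_Ici_sub_sq (a b : ℝ) :
    (fun t => ((Set.Ici a).indicator 1 t - (Set.Ici b).indicator 1 t : ℝ) ^ 2)
      = (Set.Ico (min a b) (max a b)).indicator 1 := by
  funext t
  rcases le_total a b with h | h <;>
    simp only [h, min_eq_left, min_eq_right, max_eq_left, max_eq_right, Set.indicator_apply,
      Set.mem_Ici, Set.mem_Ico, Pi.one_apply] <;>
    split_ifs <;> norm_num <;> grind

theorem integral_indicator_Ici_sub_sq (a b : ℝ) :
    ∫ t, ((Set.Ici a).indicator 1 t - (Set.Ici b).indicator 1 t : ℝ) ^ 2 = |a - b| := by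
  rw [indicator_Ici_sub_sq, integral_indicator_one measurableSet_Ico, measureReal_def,
    Real.volume_Ico, ENNReal.toReal_ofReal (sub_nonneg.mpr min_le_max),
    max_sub_min_eq_abs, abs_sub_comm]

theorem integrable_indicator_Ici_sub_sq (a b : ℝ) :
    Integrable (fun t => ((Set.Ici a).indicator 1 t - (Set.Ici b).indicator 1 t : ℝ) ^ 2) := by
  rw [indicator_Ici_sub_sq]
  exact (integrable_indicator_iff measurableSet_Ico).mpr
    (integrableOn_const (by simp [Real.volume_Ico]))

theorem negDefKernel_abs_sub : NegDefKernel (fun a b : ℝ => |a - b|) := by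
  intro n _ a c hc
  set H : Fin n → ℝ → ℝ := fun i t => (Set.Ici (a i)).indicator 1 t
  have hint : ∀ i j, Integrable (fun t => c i * c j * (H i t - H j t) ^ 2) :=
    fun i j => (integrable_indicator_Ici_sub_sq (a i) (a j)).const_mul _
  have hform : ∑ i, ∑ j, c i * c j * |a i - a j|
      = ∫ t, ∑ i, ∑ j, c i * c j * (H i t - H j t) ^ 2 := by
    rw [integral_finsetSum _ fun i _ => integrable_finsetSum _ fun j _ => hint i j]
    refine Finset.sum_congr rfl fun i _ => ?_
    rw [integral_finsetSum _ fun j _ => hint i j]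
    refine Finset.sum_congr rfl fun j _ => ?_
    rw [integral_const_mul, integral_indicator_Ici_sub_sq]
  rw [hform]
  refine integral_nonpos fun t => ?_
  rw [Pi.zero_apply, sum_sum_mul_mul_sub_sq c (fun i => H i t) hc]
  exact mul_nonpos_of_nonpos_of_nonneg (by norm_num) (sq_nonneg _)

end AbsSub

/-- The tree-Wasserstein distance is a negative definite kernel on the
set of probability measures supported on the nodes of a fixed rooted tree. -/
theorem tree_wasserstein_negative_definite {V : Type} [Fintype V] (T : WTree V) :
    NegDefKernel (fun (μ ν : {p : V → ℝ // (∀ x, 0 ≤ p x) ∧ ∑ x, p x = 1}) =>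
      T.TW μ.1 ν.1) :=
  NegDefKernel.finset_sum fun u _ =>
    (negDefKernel_abs_sub.comp fun μ : {p : V → ℝ // (∀ x, 0 ≤ p x) ∧ ∑ x, p x = 1} =>
      T.subtreeMass μ.1 u).const_mul (T.wt_nonneg u)
end

section
/- Let T be a rooted tree of depth H built by recursively partitioning a side-β hypercube in ℝ^d into 2^d equal sub-hypercubes, where nodes of T correspond to hypercube centers and the points of two equal-cardinality point clouds μ̃, ν̃ are leaves at depth H, with edge lengths given by Euclidean distances between hypercube centers. Then the 2-Wasserstein-type optimal-assignment cost satisfies W_2(μ̃, ν̃) ≤ W_{d_T^H}(μ̃, ν̃)/2 + β√d/2^H. -/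
open Finset

/-- The depth-`i` hypercube (grid cell) of side `β / 2^i` containing the point `p`. -/
noncomputable def gridCell {d : ℕ} (β : ℝ) (i : ℕ) (p : Fin d → ℝ) : Fin d → ℤ :=
  fun k => ⌊p k * 2 ^ i / β⌋

/-- Euclidean distance in ℝ^d. -/
noncomputable def eucDist {d : ℕ} (p q : Fin d → ℝ) : ℝ :=
  Real.sqrt (∑ k, (p k - q k) ^ 2)

/-- The partition-based tree metric of depth `H`: two leaves whose cells differ at
depth `j+1` are connected through edges of length `β√d/2^(j+1)` at that level, each
such level contributing `Δ_j = β√d/2^j` to the path length. -/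
noncomputable def partitionTreeDist {d : ℕ} (β : ℝ) (H : ℕ) (p q : Fin d → ℝ) : ℝ :=
  ∑ j ∈ Finset.range H,
    if gridCell β (j + 1) p = gridCell β (j + 1) q then 0
    else β * Real.sqrt d / 2 ^ j

lemma floor_eq_floor_two_mul_ediv_two (a : ℝ) : ⌊a⌋ = ⌊2 * a⌋ / 2 := by
  set m := ⌊2 * a⌋ with hm
  have hm1 : (m : ℝ) ≤ 2 * a := Int.floor_le _
  have hm2 : 2 * a < m + 1 := Int.lt_floor_add_one _
  have h1 : 2 * (m / 2) ≤ m := by omega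
  have h2 : m ≤ 2 * (m / 2) + 1 := by omega
  rw [Int.floor_eq_iff]
  constructor
  · have : ((2 * (m / 2) : ℤ) : ℝ) ≤ (m : ℝ) := by exact_mod_cast h1
    push_cast at this ⊢
    linarith
  · have : ((m : ℤ) : ℝ) ≤ ((2 * (m / 2) + 1 : ℤ) : ℝ) := by exact_mod_cast h2
    push_cast at this ⊢
    linarith

lemma floor_eq_of_floor_two_mul_eq {a b : ℝ} (h : ⌊2 * a⌋ = ⌊2 * b⌋) : ⌊a⌋ = ⌊b⌋ := by
  rw [floor_eq_floor_two_mul_ediv_two a, floor_eq_floor_two_mul_ediv_two b, h]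

lemma gridCell_mono {d : ℕ} {β : ℝ} {p q : Fin d → ℝ} {i : ℕ}
    (h : gridCell β (i + 1) p = gridCell β (i + 1) q) : gridCell β i p = gridCell β i q := by
  funext k
  have hk := congrFun h k
  simp only [gridCell] at hk ⊢
  apply floor_eq_of_floor_two_mul_eq
  rw [show 2 * (p k * 2 ^ i / β) = p k * 2 ^ (i + 1) / β by ring,
      show 2 * (q k * 2 ^ i / β) = q k * 2 ^ (i + 1) / β by ring]
  exact hk

lemma gridCell_mono_le {d : ℕ} {β : ℝ} {p q : Fin d → ℝ} {i j : ℕ} (hij : i ≤ j)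
    (h : gridCell β j p = gridCell β j q) : gridCell β i p = gridCell β i q := by
  induction j with
  | zero => rw [Nat.le_zero.mp hij]; exact h
  | succ m ih =>
    rcases Nat.lt_or_ge i (m + 1) with h' | h'
    · exact ih (Nat.lt_succ_iff.mp h') (gridCell_mono h)
    · rw [Nat.le_antisymm hij h']; exact h

lemma eucDist_le_of_gridCell_eq {d : ℕ} {β : ℝ} (hβ : 0 < β) {p q : Fin d → ℝ} {m : ℕ}
    (h : gridCell β m p = gridCell β m q) :
    eucDist p q ≤ β * Real.sqrt d / 2 ^ m := by
  have hb : (0:ℝ) < β / 2 ^ m := by positivity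
  have hcoord : ∀ k, (p k - q k) ^ 2 ≤ (β / 2 ^ m) ^ 2 := by
    intro k
    have hk := congrFun h k
    simp only [gridCell] at hk
    have fa := Int.floor_le (p k * 2 ^ m / β)
    have fa' := Int.lt_floor_add_one (p k * 2 ^ m / β)
    have fb := Int.floor_le (q k * 2 ^ m / β)
    have fb' := Int.lt_floor_add_one (q k * 2 ^ m / β)
    rw [hk] at fa fa'
    have hX1 : p k * 2 ^ m / β - q k * 2 ^ m / β ≤ 1 := by linarith
    have hX2 : -1 ≤ p k * 2 ^ m / β - q k * 2 ^ m / β := by linarith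
    have hXsq : (p k * 2 ^ m / β - q k * 2 ^ m / β) ^ 2 ≤ 1 := by nlinarith
    have h2 : p k - q k = (p k * 2 ^ m / β - q k * 2 ^ m / β) * (β / 2 ^ m) := by
      field_simp
    rw [h2, mul_pow]
    calc (p k * 2 ^ m / β - q k * 2 ^ m / β) ^ 2 * (β / 2 ^ m) ^ 2
        ≤ 1 * (β / 2 ^ m) ^ 2 := mul_le_mul_of_nonneg_right hXsq (sq_nonneg _)
      _ = (β / 2 ^ m) ^ 2 := one_mul _
  have hsum : ∑ k, (p k - q k) ^ 2 ≤ (d : ℝ) * (β / 2 ^ m) ^ 2 := by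
    calc ∑ k, (p k - q k) ^ 2 ≤ ∑ _k : Fin d, (β / 2 ^ m) ^ 2 :=
          Finset.sum_le_sum fun k _ => hcoord k
      _ = (d : ℝ) * (β / 2 ^ m) ^ 2 := by
          rw [Finset.sum_const, Finset.card_univ, Fintype.card_fin, nsmul_eq_mul]
  unfold eucDist
  calc Real.sqrt (∑ k, (p k - q k) ^ 2) ≤ Real.sqrt ((d : ℝ) * (β / 2 ^ m) ^ 2) :=
        Real.sqrt_le_sqrt hsum
    _ = β * Real.sqrt d / 2 ^ m := by
        rw [Real.sqrt_mul (Nat.cast_nonneg d), Real.sqrt_sq hb.le]; ring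

lemma key_pointwise {d : ℕ} {β : ℝ} (hβ : 0 < β) {H : ℕ} {p q : Fin d → ℝ}
    (hH : 0 < H) (hdiff : gridCell β H p ≠ gridCell β H q)
    (h0 : gridCell β 0 p = gridCell β 0 q) :
    eucDist p q ≤ partitionTreeDist β H p q / 2 + β * Real.sqrt d / 2 ^ H := by
  classical
  have hex : ∃ j, gridCell β (j + 1) p ≠ gridCell β (j + 1) q :=
    ⟨H - 1, by rw [Nat.sub_add_cancel hH]; exact hdiff⟩
  set j0 := Nat.find hex with hj0def
  have hj0 : gridCell β (j0 + 1) p ≠ gridCell β (j0 + 1) q := Nat.find_spec hex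
  have hj0H : j0 < H := by
    have hle : j0 ≤ H - 1 := Nat.find_le (by rw [Nat.sub_add_cancel hH]; exact hdiff)
    omega
  have heq : gridCell β j0 p = gridCell β j0 q := by
    rcases Nat.eq_zero_or_pos j0 with h | h
    · rw [h]; exact h0
    · obtain ⟨m, hm⟩ := Nat.exists_eq_succ_of_ne_zero h.ne'
      rw [hm]
      exact not_ne_iff.mp (Nat.find_min hex (by omega : m < j0))
  have hdall : ∀ j ∈ Finset.Ico j0 H, gridCell β (j + 1) p ≠ gridCell β (j + 1) q := by
    intro j hj heqj
    simp only [Finset.mem_Ico] at hj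
    exact hj0 (gridCell_mono_le (by omega : j0 + 1 ≤ j + 1) heqj)
  have hd : eucDist p q ≤ β * Real.sqrt d / 2 ^ j0 := eucDist_le_of_gridCell_eq hβ heq
  have hsum : ∑ j ∈ Finset.Ico j0 H, β * Real.sqrt d / 2 ^ j ≤ partitionTreeDist β H p q := by
    unfold partitionTreeDist
    have e1 : ∑ j ∈ Finset.Ico j0 H, β * Real.sqrt d / 2 ^ j
        = ∑ j ∈ Finset.Ico j0 H,
            (if gridCell β (j + 1) p = gridCell β (j + 1) q then 0
             else β * Real.sqrt d / 2 ^ j) :=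
      Finset.sum_congr rfl fun j hj => (if_neg (hdall j hj)).symm
    rw [e1]
    apply Finset.sum_le_sum_of_subset_of_nonneg
    · intro j hj
      simp only [Finset.mem_Ico, Finset.mem_range] at *
      omega
    · intro j _ _
      split_ifs
      · exact le_refl 0
      · positivity
  have hgeo : ∑ j ∈ Finset.Ico j0 H, β * Real.sqrt d / 2 ^ j
      = 2 * (β * Real.sqrt d / 2 ^ j0) - 2 * (β * Real.sqrt d / 2 ^ H) := by
    have e : ∀ j : ℕ, β * Real.sqrt d / 2 ^ j = β * Real.sqrt d * ((1:ℝ)/2) ^ j := by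
      intro j; rw [div_pow, one_pow, mul_one_div]
    simp_rw [e]
    rw [← Finset.mul_sum, geom_sum_Ico (by norm_num : ((1:ℝ)/2) ≠ 1) hj0H.le]
    ring
  linarith

/-- For two equal-cardinality point clouds lying in a side-β hypercube,
all separated into distinct hypercubes at depth `H`, the optimal-assignment Euclidean
cost is at most half the partition-tree-Wasserstein cost plus `β√d/2^H`:
`W_2(μ̃, ν̃) ≤ W_{d_T^H}(μ̃, ν̃)/2 + β√d/2^H`. -/
theorem W2_le_half_TW_plus_quantization {d n H : ℕ} (hn : 0 < n) (β : ℝ) (hβ : 0 < β)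
    (x z : Fin n → (Fin d → ℝ))
    (hbox : ∀ a : Fin n ⊕ Fin n, ∀ k, Sum.elim x z a k ∈ Set.Ico (0 : ℝ) β)
    (hsep : ∀ a b : Fin n ⊕ Fin n, a ≠ b →
      gridCell β H (Sum.elim x z a) ≠ gridCell β H (Sum.elim x z b)) :
    ∀ σT : Equiv.Perm (Fin n), ∃ σ : Equiv.Perm (Fin n),
      (1 / n : ℝ) * ∑ i, eucDist (x i) (z (σ i)) ≤
        ((1 / n : ℝ) * ∑ i, partitionTreeDist β H (x i) (z (σT i))) / 2 +
          β * Real.sqrt d / 2 ^ H := by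
  intro σT
  have hzero : ∀ a : Fin n ⊕ Fin n, gridCell β 0 (Sum.elim x z a) = fun _ => (0 : ℤ) := by
    intro a; funext k
    simp only [gridCell, pow_zero, mul_one]
    obtain ⟨h1, h2⟩ := hbox a k
    rw [Int.floor_eq_zero_iff]
    exact ⟨div_nonneg h1 hβ.le, (div_lt_one hβ).mpr h2⟩
  have hH : 0 < H := by
    rcases Nat.eq_zero_or_pos H with h | h
    · exfalso
      have i0 : Fin n := ⟨0, hn⟩
      apply hsep (Sum.inl i0) (Sum.inr i0) (by simp)
      subst h
      rw [hzero (Sum.inl i0), hzero (Sum.inr i0)]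
    · exact h
  refine ⟨σT, ?_⟩
  have hpt : ∀ i, eucDist (x i) (z (σT i)) ≤
      partitionTreeDist β H (x i) (z (σT i)) / 2 + β * Real.sqrt d / 2 ^ H := by
    intro i
    apply key_pointwise hβ hH
    · exact hsep (Sum.inl i) (Sum.inr (σT i)) (by simp)
    · have e1 := hzero (Sum.inl i)
      have e2 := hzero (Sum.inr (σT i))
      simp only [Sum.elim_inl, Sum.elim_inr] at e1 e2
      rw [e1, e2]
  have hsum : ∑ i, eucDist (x i) (z (σT i)) ≤
      ∑ i, (partitionTreeDist β H (x i) (z (σT i)) / 2 + β * Real.sqrt d / 2 ^ H) :=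
    Finset.sum_le_sum fun i _ => hpt i
  have hn' : (0:ℝ) < (n : ℝ) := Nat.cast_pos.mpr hn
  have step : (1 / n : ℝ) * ∑ i, eucDist (x i) (z (σT i)) ≤
      (1 / n : ℝ) * ∑ i, (partitionTreeDist β H (x i) (z (σT i)) / 2 + β * Real.sqrt d / 2 ^ H) :=
    mul_le_mul_of_nonneg_left hsum (by positivity)
  refine step.trans_eq ?_
  rw [Finset.sum_add_distrib, Finset.sum_const, Finset.card_univ, Fintype.card_fin,
    nsmul_eq_mul, ← Finset.sum_div]
  field_simp
end

section
/- The farthest-point clustering algorithm of Gonzalez, applied to n points in a metric space with parameter κ, returns a set of κ centers whose induced maximum cluster radius is at most twice the optimum of the κ-center problem. -/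
open Finset Metric

/-- The set of centers chosen before step `i`. -/
noncomputable def prevCenters {X : Type} {κ : ℕ} (c : Fin κ → X) (i : Fin κ) : Set X :=
  {y | ∃ j : Fin κ, (j : ℕ) < (i : ℕ) ∧ c j = y}

/-- Farthest-point clustering (Gonzalez): if each center `c i` is a point
farthest from the previously chosen centers, then the resulting maximum cluster radius
is at most twice the optimum of the κ-center problem. -/
theorem farthest_point_clustering_two_approx {X : Type} [MetricSpace X] [Fintype X]
    [Nonempty X] (κ : ℕ) (hκ : 0 < κ) (c : Fin κ → X)
    (hfar : ∀ i : Fin κ, ∀ y : X,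
      infDist y (prevCenters c i) ≤ infDist (c i) (prevCenters c i)) :
    ∀ s : Finset X, s.card = κ →
      ∀ y : X, infDist y (Set.range c) ≤ 2 * ⨆ p : X, infDist p (↑s : Set X) := by
  intro s hs y
  set R := ⨆ p : X, infDist p (↑s : Set X) with hR
  have hsne : (↑s : Set X).Nonempty := by
    rw [Finset.coe_nonempty, ← Finset.card_pos, hs]; exact hκ
  have hRle : ∀ x : X, infDist x (↑s : Set X) ≤ R := fun x =>
    le_ciSup (f := fun p : X => infDist p (↑s : Set X)) (Set.Finite.bddAbove (Set.finite_range _)) x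
  have hnear : ∀ x : X, ∃ w ∈ s, dist x w ≤ R := by
    intro x
    obtain ⟨w, hw, hdw⟩ := (s.finite_toSet.isCompact).exists_infDist_eq_dist hsne x
    exact ⟨w, hw, hdw ▸ hRle x⟩
  -- key: if two centers are within 2R, done
  have key : ∀ i j : Fin κ, (i : ℕ) < (j : ℕ) → dist (c j) (c i) ≤ 2 * R →
      infDist y (Set.range c) ≤ 2 * R := by
    intro i j hij hd
    have hmem : c i ∈ prevCenters c j := ⟨i, hij, rfl⟩
    have h1 : infDist (c j) (prevCenters c j) ≤ 2 * R :=
      (infDist_le_dist_of_mem hmem).trans hd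
    have h2 : infDist y (prevCenters c j) ≤ 2 * R := (hfar j y).trans h1
    have hsub : prevCenters c j ⊆ Set.range c := fun z ⟨k, _, hk⟩ => ⟨k, hk⟩
    exact (infDist_le_infDist_of_subset hsub ⟨_, hmem⟩).trans h2
  -- κ+1 points: the centers and y
  let g : Fin (κ + 1) → X := fun i => if h : (i : ℕ) < κ then c ⟨i, h⟩ else y
  choose n hn hdn using fun i => hnear (g i)
  have hcard : Fintype.card { x // x ∈ s } < Fintype.card (Fin (κ + 1)) := by
    simp [Fintype.card_coe, hs]
  obtain ⟨a, b, hab, heq⟩ :=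
    Fintype.exists_ne_map_eq_of_card_lt (fun i => (⟨n i, hn i⟩ : {x // x ∈ s})) hcard
  have hdist : dist (g a) (g b) ≤ 2 * R := by
    have : n a = n b := congrArg Subtype.val heq
    calc dist (g a) (g b) ≤ dist (g a) (n a) + dist (n b) (g b) := by
          rw [this]; exact dist_triangle _ _ _
      _ ≤ R + R := add_le_add (hdn a) (by rw [dist_comm]; exact hdn b)
      _ = 2 * R := by ring
  by_cases ha : (a : ℕ) < κ <;> by_cases hb : (b : ℕ) < κ
  · -- two centers close
    have hga : g a = c ⟨a, ha⟩ := dif_pos ha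
    have hgb : g b = c ⟨b, hb⟩ := dif_pos hb
    have hne : (a : ℕ) ≠ (b : ℕ) := fun h => hab (Fin.ext h)
    rcases hne.lt_or_gt with h | h
    · exact key ⟨a, ha⟩ ⟨b, hb⟩ h (by rw [dist_comm, ← hga, ← hgb]; exact hdist)
    · exact key ⟨b, hb⟩ ⟨a, ha⟩ h (by rw [← hga, ← hgb]; exact hdist)
  · -- b is y, a is a center
    have hga : g a = c ⟨a, ha⟩ := dif_pos ha
    have hgb : g b = y := dif_neg hb
    calc infDist y (Set.range c) ≤ dist y (c ⟨a, ha⟩) :=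
          infDist_le_dist_of_mem (Set.mem_range_self _)
      _ ≤ 2 * R := by rw [dist_comm, ← hga, ← hgb]; exact hdist
  · have hga : g a = y := dif_neg ha
    have hgb : g b = c ⟨b, hb⟩ := dif_pos hb
    calc infDist y (Set.range c) ≤ dist y (c ⟨b, hb⟩) :=
          infDist_le_dist_of_mem (Set.mem_range_self _)
      _ ≤ 2 * R := by rw [← hga, ← hgb]; exact hdist
  · -- both a and b have val = κ, contradiction with a ≠ b
    exact absurd (Fin.ext ((Nat.eq_of_lt_succ_of_not_lt a.isLt ha).trans
      (Nat.eq_of_lt_succ_of_not_lt b.isLt hb).symm)) hab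
end

section
/- Let T be a finite rooted tree with root r and non-negative edge lengths, and let μ, ν be probability measures on the nodes of T. For the dual Kantorovich problem with Lipschitz functions f of the form f(x) = Σ_{e ∈ P(r,x)} g(e) w_e with |g(e)| ≤ 1 (g : edges → [−1,1]), the supremum of Σ_x f(x)(μ−ν)({x}) over such f equals Σ_e w_e |μ(Γ(v_e)) − ν(Γ(v_e))|, attained by choosing g(e) = sign(μ(Γ(v_e)) − ν(Γ(v_e))). -/
open Finset

open Classical

/-- The potential function associated to edge weights `g : edges → [−1,1]`:
`f(x) = ∑_{e ∈ P(r,x)} g(e) w_e`. -/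
noncomputable def flowFun {V : Type} [Fintype V] (T : WTree V) (g : V → ℝ) (x : V) : ℝ :=
  ∑ u ∈ T.pathEdges x, g u * T.wt u

/-- The supremum of `∑_x f(x)(μ−ν)({x})` over functions of the form
`f(x) = ∑_{e ∈ P(r,x)} g(e) w_e` with `|g(e)| ≤ 1` equals
`∑_e w_e |μ(Γ(v_e)) − ν(Γ(v_e))|`, and it is attained. -/
theorem dual_kantorovich_tree_closed_form {V : Type} [Fintype V] (T : WTree V)
    (μ ν : V → ℝ) (hμ0 : ∀ x, 0 ≤ μ x) (hμ1 : ∑ x, μ x = 1)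
    (hν0 : ∀ x, 0 ≤ ν x) (hν1 : ∑ x, ν x = 1) :
    IsGreatest {s : ℝ | ∃ g : V → ℝ, (∀ u, |g u| ≤ 1) ∧
        s = ∑ x, flowFun T g x * (μ x - ν x)}
      (∑ u ∈ Finset.univ.filter (fun u => u ≠ T.root),
        T.wt u * |T.subtreeMass μ u - T.subtreeMass ν u|) := by
  have key : ∀ g : V → ℝ, ∑ x, flowFun T g x * (μ x - ν x)
      = ∑ u ∈ Finset.univ.filter (fun u => u ≠ T.root),
          g u * T.wt u * (T.subtreeMass μ u - T.subtreeMass ν u) := by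
    intro g
    have h1 : ∀ x, flowFun T g x * (μ x - ν x)
        = ∑ u, if u ≠ T.root ∧ T.isAnc u x then g u * T.wt u * (μ x - ν x) else 0 := by
      intro x
      rw [flowFun, WTree.pathEdges, Finset.sum_filter, Finset.sum_mul]
      apply Finset.sum_congr rfl
      intro u _
      split <;> simp
    simp only [h1]
    rw [Finset.sum_comm]
    rw [Finset.sum_filter]
    apply Finset.sum_congr rfl
    intro u _
    by_cases hu : u ≠ T.root
    · rw [if_pos hu]
      simp only [hu, ne_eq, not_false_eq_true, true_and]
      rw [WTree.subtreeMass, WTree.subtreeMass, ← Finset.sum_sub_distrib,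
        Finset.mul_sum, Finset.sum_filter]
    · rw [if_neg hu]
      push_neg at hu
      simp [hu]
  constructor
  · refine ⟨fun u => SignType.sign (T.subtreeMass μ u - T.subtreeMass ν u), ?_, ?_⟩
    · intro u
      cases h : SignType.sign (T.subtreeMass μ u - T.subtreeMass ν u) <;> simp [h]
    · rw [key]
      apply Finset.sum_congr rfl
      intro u _
      symm
      rw [mul_right_comm, sign_mul_self]
      exact mul_comm _ _
  · rintro s ⟨g, hg, rfl⟩
    rw [key]
    apply Finset.sum_le_sum
    intro u _
    calc g u * T.wt u * (T.subtreeMass μ u - T.subtreeMass ν u)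
        ≤ |g u * T.wt u * (T.subtreeMass μ u - T.subtreeMass ν u)| := le_abs_self _
      _ = |g u| * T.wt u * |T.subtreeMass μ u - T.subtreeMass ν u| := by
          rw [abs_mul, abs_mul, abs_of_nonneg (T.wt_nonneg u)]
      _ ≤ 1 * T.wt u * |T.subtreeMass μ u - T.subtreeMass ν u| :=
          mul_le_mul_of_nonneg_right
            (mul_le_mul_of_nonneg_right (hg u) (T.wt_nonneg u)) (abs_nonneg _)
      _ = T.wt u * |T.subtreeMass μ u - T.subtreeMass ν u| := by ring
end
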